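/- For any lex graph L(n,m), the intervals [A \ Int(A); A ∪ Ext(A)] over all maximal independent sets A form a partition of 2^{[n]}. -/

import Mathlib

open Finset

/-- A set of vertices is independent: no two of its vertices are adjacent. -/
def Indep {n : ℕ} (G : SimpleGraph (Fin n)) (A : Finset (Fin n)) : Prop :=
  ∀ u ∈ A, ∀ v ∈ A, ¬ G.Adj u v

instance {n : ℕ} (G : SimpleGraph (Fin n)) [DecidableRel G.Adj] (A : Finset (Fin n)) :
    Decidable (Indep G A) := by unfold Indep; infer_instance

/-- A maximal independent set. -/
def MaxIndep {n : ℕ} (G : SimpleGraph (Fin n)) (A : Finset (Fin n)) : Prop :=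
  Indep G A ∧ ∀ B, Indep G B → A ⊆ B → A = B

/-- Externally active vertices with respect to the independent set `A`:
vertices outside `A` adjacent to and greater than some vertex of `A`. -/
def ExtAct {n : ℕ} (G : SimpleGraph (Fin n)) [DecidableRel G.Adj] (A : Finset (Fin n)) :
    Finset (Fin n) :=
  univ.filter (fun v => v ∉ A ∧ ∃ a ∈ A, G.Adj v a ∧ a < v)

/-- The neighbours of `v` that can substitute `v` in `A` keeping independence. -/
def Subs {n : ℕ} (G : SimpleGraph (Fin n)) [DecidableRel G.Adj] (A : Finset (Fin n))
    (v : Fin n) : Finset (Fin n) :=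
  univ.filter (fun u => G.Adj v u ∧ Indep G (insert u (A.erase v)))

/-- Internally active vertices of `A`: vertices `v ∈ A` with `Subs v = ∅` or
`v` greater than every element of `Subs v`. -/
def IntAct {n : ℕ} (G : SimpleGraph (Fin n)) [DecidableRel G.Adj] (A : Finset (Fin n)) :
    Finset (Fin n) :=
  A.filter (fun v => ∀ u ∈ Subs G A v, u < v)

/-- The interval `[A;B]` of the Boolean lattice. -/
def Itv {n : ℕ} (A B : Finset (Fin n)) : Set (Finset (Fin n)) :=
  {X | A ⊆ X ∧ X ⊆ B}

/-- The lexicographic rank (0-indexed) of the pair `{a,b}` with `a < b` among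
the 2-element subsets of `{0,…,n-1}`. -/
def lexRank (n a b : ℕ) : ℕ :=
  a * (n - 1) - a * (a - 1) / 2 + (b - a - 1)

/-- The lex graph `L(n,m)`: vertex set `{0,…,n-1}`, edges the first `m` pairs
in lexicographic order. -/
def lexGraph (n m : ℕ) : SimpleGraph (Fin n) where
  Adj u v := u ≠ v ∧ lexRank n (min (u : ℕ) (v : ℕ)) (max (u : ℕ) (v : ℕ)) < m
  symm := by
    constructor
    intro u v h
    exact ⟨h.1.symm, by rw [min_comm, max_comm]; exact h.2⟩
  loopless := by
    constructor
    intro u h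
    exact h.1 rfl

instance (n m : ℕ) : DecidableRel (lexGraph n m).Adj := fun u v =>
  inferInstanceAs (Decidable (u ≠ v ∧ lexRank n (min (u : ℕ) (v : ℕ)) (max (u : ℕ) (v : ℕ)) < m))

/-!
The first `m` pairs in lexicographic order are the pairs `u < v` with `(u, v) ≤ (c, e)`
lexicographically, for some vertices `c ≤ e`. So the vertices below `c` are adjacent to all
others, `c` is adjacent to the vertices of `(c, e]`, and there are no other edges. The maximal
independent sets are the singletons `{v}` with `v < c`, the set `{c} ∪ (e, n)` and, if `c < e`,
the set `(c, n)`. Their activity intervals consist of the sets with minimum `v`, of the sets above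
`c` containing `c` (all sets above `c` if `c = e`), and of the sets above `c` avoiding `c`; every
subset of the vertices lies in exactly one of them.
-/

theorem iUnion_eq_univ_and_pairwiseDisjoint_of_index {α β : Type*} {S : Set β} {I : β → Set α}
    (index : α → β) (index_mem : ∀ x, index x ∈ S) (mem_index : ∀ x, x ∈ I (index x))
    (eq_index : ∀ A ∈ S, ∀ x ∈ I A, A = index x) :
    (⋃ A ∈ S, I A) = Set.univ ∧ S.PairwiseDisjoint I := by
  refine ⟨Set.eq_univ_of_forall fun x => Set.mem_biUnion (index_mem x) (mem_index x),
    fun A hA B hB hAB => ?_⟩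
  refine Set.disjoint_left.2 fun x hxA hxB => hAB ?_
  rw [eq_index A hA x hxA, eq_index B hB x hxB]

section Activity

variable {n : ℕ} {G : SimpleGraph (Fin n)}

theorem indep_singleton (v : Fin n) : Indep G {v} := by
  simp [Indep]

theorem indep_insert {w : Fin n} {A : Finset (Fin n)} :
    Indep G (insert w A) ↔ Indep G A ∧ ∀ a ∈ A, ¬ G.Adj w a := by
  simp only [Indep, forall_mem_insert, G.irrefl, not_false_eq_true, true_and]
  constructor
  · rintro ⟨hw, hA⟩
    exact ⟨fun u hu v hv => (hA u hu).2 v hv, hw⟩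
  · rintro ⟨hA, hw⟩
    exact ⟨hw, fun u hu => ⟨fun h => hw u hu h.symm, hA u hu⟩⟩

theorem maxIndep_iff {A : Finset (Fin n)} :
    MaxIndep G A ↔ Indep G A ∧ ∀ w ∉ A, ∃ a ∈ A, G.Adj w a := by
  refine ⟨fun hA => ⟨hA.1, fun w hw => ?_⟩, fun ⟨hA, hdom⟩ => ⟨hA, fun B hB hAB => ?_⟩⟩
  · by_contra! hfree
    have := hA.2 _ (indep_insert.2 ⟨hA.1, hfree⟩) (subset_insert w A)
    exact hw (this ▸ mem_insert_self w A)
  · refine hAB.antisymm fun w hwB => ?_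
    by_contra hwA
    obtain ⟨a, haA, hwa⟩ := hdom w hwA
    exact hB w hwB a (hAB haA) hwa

variable [DecidableRel G.Adj]

def activityItv (G : SimpleGraph (Fin n)) [DecidableRel G.Adj] (A : Finset (Fin n)) :
    Set (Finset (Fin n)) :=
  Itv (A \ IntAct G A) (A ∪ ExtAct G A)

theorem mem_subs {A : Finset (Fin n)} {v u : Fin n} :
    u ∈ Subs G A v ↔ G.Adj v u ∧ Indep G (insert u (A.erase v)) := by
  simp [Subs]

theorem mem_intAct {A : Finset (Fin n)} {v : Fin n} :
    v ∈ IntAct G A ↔ v ∈ A ∧ ∀ u ∈ Subs G A v, u < v := by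
  simp [IntAct]

theorem mem_extAct {A : Finset (Fin n)} {v : Fin n} :
    v ∈ ExtAct G A ↔ v ∉ A ∧ ∃ a ∈ A, G.Adj v a ∧ a < v := by
  simp [ExtAct]

theorem mem_intAct_of_forall_adj_lt {A : Finset (Fin n)} {v : Fin n} (hv : v ∈ A)
    (h : ∀ u, G.Adj v u → u < v) : v ∈ IntAct G A :=
  mem_intAct.2 ⟨hv, fun u hu => h u (mem_subs.1 hu).1⟩

end Activity

/-- The rank of `{a, a + 1}`, the first pair with smaller element `a`. -/
def lexRowStart (n a : ℕ) : ℕ := lexRank n a (a + 1)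

theorem lexRank_eq_lexRowStart_add (n a b : ℕ) :
    lexRank n a b = lexRowStart n a + (b - a - 1) := by
  unfold lexRowStart lexRank; omega

theorem lexRowStart_zero (n : ℕ) : lexRowStart n 0 = 0 := by
  simp [lexRowStart, lexRank]

theorem lexRowStart_succ {n a : ℕ} (ha : a < n) :
    lexRowStart n (a + 1) = lexRowStart n a + (n - 1 - a) := by
  unfold lexRowStart lexRank
  have hlin : (a + 1) * (n - 1) = a * (n - 1) + (n - 1) := by ring
  have hsq : (a + 1) * (a + 1 - 1) = a * (a - 1) + 2 * a := by cases a <;> simp; ring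
  have heven : a * (a - 1) % 2 = 0 := Nat.even_iff.1 (Nat.even_mul_pred_self a)
  have hle : a * (a - 1) ≤ a * (n - 1) := Nat.mul_le_mul_left a (by omega)
  omega

theorem lexRowStart_mono {n a b : ℕ} (hab : a ≤ b) (hb : b < n) :
    lexRowStart n a ≤ lexRowStart n b := by
  induction b, hab using Nat.le_induction with
  | base => rfl
  | succ k _ ih => rw [lexRowStart_succ (by omega)]; exact (ih (by omega)).trans (by omega)

def EdgesLexBelow {n : ℕ} (G : SimpleGraph (Fin n)) (c e : Fin n) : Prop :=
  ∀ u v : Fin n, u < v → (G.Adj u v ↔ toLex (u, v) ≤ toLex (c, e))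

theorem lexGraph_adj_iff_of_lt {n m : ℕ} {u v : Fin n} (huv : u < v) :
    (lexGraph n m).Adj u v ↔ lexRank n u v < m := by
  have hmin : min (u : ℕ) v = u := min_eq_left (Fin.le_def.1 huv.le)
  have hmax : max (u : ℕ) v = v := max_eq_right (Fin.le_def.1 huv.le)
  simp [lexGraph, huv.ne, hmin, hmax]

theorem exists_edgesLexBelow_lexGraph {n : ℕ} (m : ℕ) (hn : 0 < n) :
    ∃ c e : Fin n, c ≤ e ∧ EdgesLexBelow (lexGraph n m) c e := by
  -- `d` is the last row starting at a rank `≤ m`; the edges of row `d` are its first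
  -- `m - lexRowStart n d` pairs, possibly all `n - 1 - d` of them.
  obtain ⟨d, hd, hd_le, hd_max⟩ : ∃ d ≤ n - 1, lexRowStart n d ≤ m ∧
      ∀ a, d < a → a ≤ n - 1 → m < lexRowStart n a :=
    ⟨_, Nat.findGreatest_le _,
      Nat.findGreatest_spec (P := fun a => lexRowStart n a ≤ m) (Nat.zero_le _)
        (by rw [lexRowStart_zero]; exact Nat.zero_le m),
      fun _ h1 h2 =>
        not_le.1 (Nat.findGreatest_is_greatest (P := fun a => lexRowStart n a ≤ m) h1 h2)⟩
  refine ⟨⟨d, by omega⟩, ⟨d + min (m - lexRowStart n d) (n - 1 - d), by omega⟩,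
    Fin.le_def.2 (Nat.le_add_right _ _), fun u v huv => ?_⟩
  have hv : (v : ℕ) < n := v.isLt
  rw [lexGraph_adj_iff_of_lt huv, Prod.Lex.toLex_le_toLex, lexRank_eq_lexRowStart_add]
  simp only [Fin.lt_def, Fin.le_def, Fin.ext_iff] at huv ⊢
  rcases lt_trichotomy (u : ℕ) d with hu | hu | hu
  · have := lexRowStart_mono (by omega : (u : ℕ) + 1 ≤ d) (by omega : d < n)
    have := lexRowStart_succ (by omega : (u : ℕ) < n)
    omega
  · subst hu
    omega
  · have := hd_max u hu (by omega)
    omega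

/-- The candidate maximal independent set whose activity interval contains `X`. -/
def lexIndex {n : ℕ} (c e : Fin n) (X : Finset (Fin n)) : Finset (Fin n) :=
  if h : ∃ v ∈ X, v < c then {X.min' (let ⟨v, hv, _⟩ := h; ⟨v, hv⟩)}
  else if c < e ∧ c ∉ X then Ioi c else insert c (Ioi e)

namespace EdgesLexBelow

variable {n : ℕ} {G : SimpleGraph (Fin n)} {c e : Fin n}

theorem adj_iff (hG : EdgesLexBelow G c e) {u v : Fin n} :
    G.Adj u v ↔ (u < v ∧ (u < c ∨ u = c ∧ v ≤ e)) ∨ (v < u ∧ (v < c ∨ v = c ∧ u ≤ e)) := by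
  rcases lt_trichotomy u v with huv | rfl | huv
  · rw [hG u v huv, Prod.Lex.toLex_le_toLex]; dsimp only; omega
  · simp
  · rw [G.adj_comm, hG v u huv, Prod.Lex.toLex_le_toLex]; dsimp only; omega

theorem indep_Ioi (hG : EdgesLexBelow G c e) : Indep G (Ioi c) := by
  intro u hu v hv huv
  rw [mem_Ioi] at hu hv
  rw [hG.adj_iff] at huv
  omega

theorem indep_insert_Ioi (hG : EdgesLexBelow G c e) (hce : c ≤ e) :
    Indep G (insert c (Ioi e)) := by
  intro u hu v hv huv
  rw [mem_insert, mem_Ioi] at hu hv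
  rw [hG.adj_iff] at huv
  omega

theorem maxIndep_singleton (hG : EdgesLexBelow G c e) {v : Fin n} (hv : v < c) :
    MaxIndep G {v} := by
  refine maxIndep_iff.2 ⟨indep_singleton v, fun w hw => ⟨v, mem_singleton_self v, ?_⟩⟩
  rw [mem_singleton] at hw
  rw [hG.adj_iff]
  omega

theorem maxIndep_insert_Ioi (hG : EdgesLexBelow G c e) (hce : c ≤ e) :
    MaxIndep G (insert c (Ioi e)) := by
  refine maxIndep_iff.2 ⟨hG.indep_insert_Ioi hce, fun w hw => ⟨c, mem_insert_self c _, ?_⟩⟩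
  rw [mem_insert, mem_Ioi] at hw
  rw [hG.adj_iff]
  omega

theorem maxIndep_Ioi (hG : EdgesLexBelow G c e) (hce : c < e) : MaxIndep G (Ioi c) := by
  refine maxIndep_iff.2 ⟨hG.indep_Ioi, fun w hw => ⟨e, mem_Ioi.2 hce, ?_⟩⟩
  rw [mem_Ioi] at hw
  rw [hG.adj_iff]
  omega

theorem maxIndep_cases (hG : EdgesLexBelow G c e) (hce : c ≤ e) {A : Finset (Fin n)}
    (hA : MaxIndep G A) :
    (∃ v < c, A = {v}) ∨ A = insert c (Ioi e) ∨ (c < e ∧ A = Ioi c) := by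
  by_cases hlow : ∃ v ∈ A, v < c
  · obtain ⟨v, hvA, hv⟩ := hlow
    refine Or.inl ⟨v, hv, eq_singleton_iff_unique_mem.2 ⟨hvA, fun w hwA => ?_⟩⟩
    by_contra hwv
    exact hA.1 v hvA w hwA (hG.adj_iff.2 (by omega))
  push Not at hlow
  by_cases hcA : c ∈ A
  · refine Or.inr (Or.inl (hA.2 _ (hG.indep_insert_Ioi hce) fun w hwA => ?_))
    have hcw : ¬ G.Adj c w := hA.1 c hcA w hwA
    have := hlow w hwA
    rw [hG.adj_iff] at hcw
    rw [mem_insert, mem_Ioi]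
    omega
  · have hgt : ∀ w ∈ A, c < w := fun w hwA =>
      lt_of_le_of_ne (hlow w hwA) fun h => hcA (h ▸ hwA)
    obtain ⟨a, haA, hca⟩ := (maxIndep_iff.1 hA).2 c hcA
    have := hgt a haA
    rw [hG.adj_iff] at hca
    refine Or.inr (Or.inr ⟨by omega, ?_⟩)
    exact hA.2 _ hG.indep_Ioi fun w hwA => mem_Ioi.2 (hgt w hwA)

theorem maxIndep_lexIndex (hG : EdgesLexBelow G c e) (hce : c ≤ e) (X : Finset (Fin n)) :
    MaxIndep G (lexIndex c e X) := by
  unfold lexIndex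
  split_ifs with hlow hfree
  · obtain ⟨v, hvX, hv⟩ := hlow
    exact hG.maxIndep_singleton ((min'_le X v hvX).trans_lt hv)
  · exact hG.maxIndep_Ioi hfree.1
  · exact hG.maxIndep_insert_Ioi hce

variable [DecidableRel G.Adj]

theorem activityItv_singleton (hG : EdgesLexBelow G c e) {v : Fin n} (hv : v < c) :
    activityItv G {v} = Itv {v} (Ici v) := by
  have hlower : {v} \ IntAct G {v} = {v} := by
    rw [Finset.sdiff_eq_self_iff_disjoint, disjoint_singleton_left, mem_intAct]
    rintro ⟨-, hsubs⟩
    have hc : c ∈ Subs G {v} v := by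
      rw [mem_subs, erase_singleton, insert_empty]
      exact ⟨hG.adj_iff.2 (by omega), indep_singleton c⟩
    exact (hsubs c hc).not_gt hv
  have hupper : {v} ∪ ExtAct G {v} = Ici v := by
    ext w
    simp only [mem_union, mem_singleton, mem_extAct, exists_eq_left, mem_Ici, hG.adj_iff]
    omega
  rw [activityItv, hlower, hupper]

theorem activityItv_insert_Ioi (hG : EdgesLexBelow G c e) (hce : c ≤ e) :
    activityItv G (insert c (Ioi e)) = Itv (if c < e then {c} else ∅) (Ici c) := by
  have hlower : insert c (Ioi e) \ IntAct G (insert c (Ioi e)) = if c < e then {c} else ∅ := by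
    have hactive : ∀ w ∈ insert c (Ioi e), w ≠ c ∨ c = e → w ∈ IntAct G (insert c (Ioi e)) := by
      intro w hw hwc
      refine mem_intAct_of_forall_adj_lt hw fun u hwu => ?_
      rw [mem_insert, mem_Ioi] at hw
      rw [hG.adj_iff] at hwu
      omega
    have hpassive : c < e → c ∉ IntAct G (insert c (Ioi e)) := by
      intro hce' hc
      have he : e ∈ Subs G (insert c (Ioi e)) c := by
        rw [mem_subs, erase_insert (by rw [mem_Ioi]; exact not_lt.2 hce)]
        refine ⟨hG.adj_iff.2 (by omega), fun u hu v hv huv => ?_⟩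
        rw [mem_insert, mem_Ioi] at hu hv
        rw [hG.adj_iff] at huv
        omega
      exact ((mem_intAct.1 hc).2 e he).not_gt hce'
    ext w
    rw [mem_sdiff]
    split_ifs with hce'
    · rw [mem_singleton]
      constructor
      · rintro ⟨hw, hwint⟩
        by_contra hwc
        exact hwint (hactive w hw (Or.inl hwc))
      · rintro rfl
        exact ⟨mem_insert_self _ _, hpassive hce'⟩
    · simp only [notMem_empty, iff_false, not_and, not_not]
      exact fun hw => hactive w hw (Or.inr (by omega))
  have hupper : insert c (Ioi e) ∪ ExtAct G (insert c (Ioi e)) = Ici c := by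
    ext w
    simp only [mem_union, mem_insert, mem_Ioi, mem_extAct, mem_Ici]
    constructor
    · rintro ((rfl | hew) | ⟨-, a, ha, -, haw⟩)
      · exact le_rfl
      · exact hce.trans hew.le
      · rcases ha with rfl | hea
        exacts [haw.le, (hce.trans hea.le).trans haw.le]
    · intro hcw
      by_cases hw : w = c ∨ e < w
      · exact Or.inl hw
      · exact Or.inr ⟨hw, c, Or.inl rfl, hG.adj_iff.2 (by omega), by omega⟩
  rw [activityItv, hlower, hupper]

theorem activityItv_Ioi (hG : EdgesLexBelow G c e) :
    activityItv G (Ioi c) = Itv ∅ (Ioi c) := by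
  have hlower : Ioi c \ IntAct G (Ioi c) = ∅ := by
    refine sdiff_eq_empty_iff_subset.2 fun w hw => mem_intAct_of_forall_adj_lt hw fun u hwu => ?_
    rw [mem_Ioi] at hw
    rw [hG.adj_iff] at hwu
    omega
  have hupper : Ioi c ∪ ExtAct G (Ioi c) = Ioi c := by
    refine union_eq_left.2 fun w hw => ?_
    obtain ⟨hwc, a, hac, -, haw⟩ := mem_extAct.1 hw
    rw [mem_Ioi] at hwc hac
    exact absurd (hac.trans haw) hwc
  rw [activityItv, hlower, hupper]

theorem mem_activityItv_lexIndex (hG : EdgesLexBelow G c e) (hce : c ≤ e)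
    (X : Finset (Fin n)) :
    X ∈ activityItv G (lexIndex c e X) := by
  unfold lexIndex
  split_ifs with hlow hfree
  · obtain ⟨v, hvX, hv⟩ := hlow
    rw [hG.activityItv_singleton ((min'_le X v hvX).trans_lt hv)]
    exact ⟨singleton_subset_iff.2 (min'_mem X _), fun w hw => mem_Ici.2 (min'_le X w hw)⟩
  · rw [hG.activityItv_Ioi]
    push Not at hlow
    refine ⟨empty_subset X, fun w hw => mem_Ioi.2 (lt_of_le_of_ne (hlow w hw) ?_)⟩
    rintro rfl
    exact hfree.2 hw
  · rw [hG.activityItv_insert_Ioi hce]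
    push Not at hlow hfree
    refine ⟨?_, fun w hw => mem_Ici.2 (hlow w hw)⟩
    split_ifs with hce'
    exacts [singleton_subset_iff.2 (hfree hce'), empty_subset X]

theorem eq_lexIndex (hG : EdgesLexBelow G c e) (hce : c ≤ e) {A X : Finset (Fin n)}
    (hA : MaxIndep G A) (hX : X ∈ activityItv G A) : A = lexIndex c e X := by
  unfold lexIndex
  rcases hG.maxIndep_cases hce hA with ⟨v, hv, rfl⟩ | rfl | ⟨hce', rfl⟩
  · rw [hG.activityItv_singleton hv] at hX
    obtain ⟨hvX, hXv⟩ := hX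
    have hvX : v ∈ X := singleton_subset_iff.1 hvX
    rw [dif_pos ⟨v, hvX, hv⟩]
    exact congrArg _ (le_antisymm (mem_Ici.1 (hXv (min'_mem X _))) (min'_le X v hvX))
  · rw [hG.activityItv_insert_Ioi hce] at hX
    obtain ⟨hcX, hXc⟩ := hX
    have hlow : ¬ ∃ v ∈ X, v < c := fun ⟨v, hvX, hv⟩ => (mem_Ici.1 (hXc hvX)).not_gt hv
    have hfree : ¬ (c < e ∧ c ∉ X) := fun ⟨hce', hcX'⟩ => by
      rw [if_pos hce', singleton_subset_iff] at hcX
      exact hcX' hcX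
    rw [dif_neg hlow, if_neg hfree]
  · rw [hG.activityItv_Ioi] at hX
    have hXc := hX.2
    have hlow : ¬ ∃ v ∈ X, v < c := fun ⟨v, hvX, hv⟩ => (mem_Ioi.1 (hXc hvX)).asymm hv
    rw [dif_neg hlow, if_pos ⟨hce', fun hcX => lt_irrefl c (mem_Ioi.1 (hXc hcX))⟩]

end EdgesLexBelow

/-- For any lex graph the intervals generated by the maximal independent sets
form a partition of the Boolean lattice of the vertex set. -/
theorem lexGraph_partition (n m : ℕ) :
    (⋃ A ∈ {A : Finset (Fin n) | MaxIndep (lexGraph n m) A},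
        Itv (A \ IntAct (lexGraph n m) A) (A ∪ ExtAct (lexGraph n m) A)) = Set.univ ∧
    ({A : Finset (Fin n) | MaxIndep (lexGraph n m) A}.PairwiseDisjoint
        (fun A => Itv (A \ IntAct (lexGraph n m) A) (A ∪ ExtAct (lexGraph n m) A))) := by
  rcases Nat.eq_zero_or_pos n with rfl | hn
  · refine iUnion_eq_univ_and_pairwiseDisjoint_of_index (fun _ => ∅)
      (fun _ => maxIndep_iff.2 ⟨fun u => u.elim0, fun w => w.elim0⟩)
      (fun _ => ⟨fun w => w.elim0, fun w => w.elim0⟩) fun _ _ _ _ => Subsingleton.elim _ _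
  · obtain ⟨c, e, hce, hG⟩ := exists_edgesLexBelow_lexGraph m hn
    exact iUnion_eq_univ_and_pairwiseDisjoint_of_index (lexIndex c e)
      (hG.maxIndep_lexIndex hce) (hG.mem_activityItv_lexIndex hce)
      fun A hA X hX => hG.eq_lexIndex hce hA hX
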